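/- arXiv:2510.12442 — 4 statements merged into one kernel-verified Lean document; each statement's English description precedes it below -/
import Mathlib

section
/- For a non-negative continuous random variable X with cdf F and survival function F̄, and 0 < α ≠ 1, ξ_α^w(X) = (1/(2(α−1))) ∫₀^∞ x² (1 − α F̄(x)^{α−1}) dF(x). -/
/-! Write `F̄` for the survival function. Since `μ` has no atoms, `F̄` pushes `μ` forward to the
uniform law on `(0, 1]`, and `μ` restricted to `(x, ∞)` to Lebesgue measure on `(0, F̄ x)`; hence
`∫_{y > x} (1 - α F̄(y)^(α-1)) dμ(y) = F̄ x - F̄ x ^ α`. Multiplying by `x`, integrating over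
`x > 0` and exchanging the integrals, the inner integral `∫_0^y x dx = y² / 2` appears
(`y ≥ 0` since `μ` lives on `[0, ∞)`). -/

open MeasureTheory Set Filter Topology Function

lemma Set.Iio_inter_Ioc_of_le {α : Type*} [LinearOrder α] {a b c : α} (h : c ≤ b) :
    Iio c ∩ Ioc a b = Ioo a c := by
  ext y
  simp only [mem_inter_iff, mem_Iio, mem_Ioc, mem_Ioo]
  exact ⟨fun hy => ⟨hy.2.1, hy.1⟩, fun hy => ⟨hy.2, hy.1, hy.2.le.trans h⟩⟩

lemma setIntegral_Ioi_zero_indicator_Iio {y : ℝ} (hy : 0 ≤ y) (f : ℝ → ℝ) :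
    ∫ x in Ioi 0, (Iio y).indicator f x = ∫ x in 0..y, f x := by
  rw [integral_indicator measurableSet_Iio, Measure.restrict_restrict measurableSet_Iio,
    Iio_inter_Ioi, intervalIntegral.integral_of_le hy, integral_Ioc_eq_integral_Ioo]

lemma setIntegral_Ioi_zero_indicator_Iio_mul {y : ℝ} (hy : 0 ≤ y) (c : ℝ) :
    ∫ x in Ioi 0, (Iio y).indicator (fun x => x * c) x = y ^ 2 * c / 2 := by
  rw [setIntegral_Ioi_zero_indicator_Iio hy, intervalIntegral.integral_mul_const, integral_id]
  ring

lemma setIntegral_Ioi_zero_norm_indicator_Iio_mul {y : ℝ} (hy : 0 ≤ y) (c : ℝ) :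
    ∫ x in Ioi 0, ‖(Iio y).indicator (fun x => x * c) x‖ = y ^ 2 * ‖c‖ / 2 := by
  simp_rw [norm_indicator_eq_indicator_norm]
  rw [setIntegral_Ioi_zero_indicator_Iio hy,
    intervalIntegral.integral_congr (g := fun x => x * ‖c‖) fun x hx => ?_,
    intervalIntegral.integral_mul_const, integral_id]
  · ring
  rw [uIcc_of_le hy] at hx
  simp [norm_mul, abs_of_nonneg hx.1]

lemma integrable_indicator_Iio_mul_restrict_Ioi (y c : ℝ) :
    Integrable ((Iio y).indicator fun x => x * c) (volume.restrict (Ioi 0)) := by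
  rw [integrable_indicator_iff measurableSet_Iio, IntegrableOn,
    Measure.restrict_restrict measurableSet_Iio, Iio_inter_Ioi]
  exact (continuous_id.mul continuous_const).integrableOn_Icc.mono_set Ioo_subset_Icc_self

theorem setIntegral_Ioi_mul_setIntegral_Ioi {μ : Measure ℝ} [SFinite μ] (hμ : μ (Iio 0) = 0)
    {g : ℝ → ℝ} (hg : AEStronglyMeasurable g μ) (hg2 : Integrable (fun y => y ^ 2 * g y) μ) :
    ∫ x in Ioi 0, x * ∫ y in Ioi x, g y ∂μ = (∫ y, y ^ 2 * g y ∂μ) / 2 := by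
  set F : ℝ → ℝ → ℝ := fun x y => (Ioi x).indicator (fun y => x * g y) y
  have hnonneg : ∀ᵐ y ∂μ, 0 ≤ y :=
    measure_mono_null (fun _ hy => not_le.1 (notMem_ofPred_iff.1 hy)) hμ
  have hF : Integrable (uncurry F) ((volume.restrict (Ioi 0)).prod μ) := by
    refine (integrable_prod_iff' ?_).2 ⟨.of_forall fun y =>
      integrable_indicator_Iio_mul_restrict_Ioi y (g y), ?_⟩
    · exact (measurable_fst.aestronglyMeasurable.mul hg.comp_snd).indicator
        (measurableSet_lt measurable_fst measurable_snd)
    refine (hg2.norm.div_const 2).congr (hnonneg.mono fun y hy => ?_)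
    show ‖y ^ 2 * g y‖ / 2 = ∫ x in Ioi 0, ‖(Iio y).indicator (fun x => x * g y) x‖
    rw [setIntegral_Ioi_zero_norm_indicator_Iio_mul hy, norm_mul, norm_pow, Real.norm_eq_abs,
      sq_abs]
  calc ∫ x in Ioi 0, x * ∫ y in Ioi x, g y ∂μ = ∫ x in Ioi 0, ∫ y, F x y ∂μ := by
        simp_rw [F, integral_indicator measurableSet_Ioi, integral_const_mul]
    _ = ∫ y, (∫ x in Ioi 0, F x y) ∂μ := integral_integral_swap hF
    _ = ∫ y, y ^ 2 * g y / 2 ∂μ := integral_congr_ae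
        (hnonneg.mono fun y hy => setIntegral_Ioi_zero_indicator_Iio_mul hy (g y))
    _ = (∫ y, y ^ 2 * g y ∂μ) / 2 := integral_div _ _

lemma setIntegral_Ioo_mul_rpow_sub_one {α c : ℝ} (hα : 0 < α) (hc : 0 ≤ c) :
    ∫ t in Ioo 0 c, α * t ^ (α - 1) = c ^ α := by
  rw [← integral_Ioc_eq_integral_Ioo, ← intervalIntegral.integral_of_le hc,
    intervalIntegral.integral_const_mul, integral_rpow (Or.inl (by linarith)), sub_add_cancel,
    Real.zero_rpow hα.ne', sub_zero, mul_div_cancel₀ _ hα.ne']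

namespace ProbabilityTheory

noncomputable def survival (μ : Measure ℝ) (x : ℝ) : ℝ := μ.real (Ioi x)

variable {μ : Measure ℝ}

lemma survival_nonneg (x : ℝ) : 0 ≤ survival μ x := measureReal_nonneg

lemma antitone_survival [IsFiniteMeasure μ] : Antitone (survival μ) := fun _ _ h =>
  measureReal_mono (Ioi_subset_Ioi h)

lemma measurable_survival [IsFiniteMeasure μ] : Measurable (survival μ) :=
  antitone_survival.measurable

lemma ofReal_survival [IsFiniteMeasure μ] (x : ℝ) : ENNReal.ofReal (survival μ x) = μ (Ioi x) :=
  ofReal_measureReal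

variable [IsProbabilityMeasure μ]

lemma survival_le_one (x : ℝ) : survival μ x ≤ 1 := measureReal_le_one

lemma survival_eq_one_sub_cdf : survival μ = fun x => 1 - cdf μ x := by
  ext x
  rw [survival, ← compl_Iic, measureReal_compl measurableSet_Iic, probReal_univ, cdf_eq_real]

lemma tendsto_survival_atTop : Tendsto (survival μ) atTop (𝓝 0) := by
  simpa [survival_eq_one_sub_cdf] using (tendsto_cdf_atTop μ).const_sub 1

lemma tendsto_survival_atBot : Tendsto (survival μ) atBot (𝓝 1) := by
  simpa [survival_eq_one_sub_cdf] using (tendsto_cdf_atBot μ).const_sub 1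

lemma continuous_cdf [NullSingletonClass μ] : Continuous (cdf μ) := by
  refine continuous_iff_continuousAt.2 fun x => ?_
  rw [(monotone_cdf μ).continuousAt_iff_leftLim_eq_rightLim, (cdf μ).rightLim_eq]
  have h := (cdf μ).measure_singleton x
  rw [measure_cdf, measure_singleton, eq_comm, ENNReal.ofReal_eq_zero, sub_nonpos] at h
  exact le_antisymm ((monotone_cdf μ).leftLim_le le_rfl) h

lemma continuous_survival [NullSingletonClass μ] : Continuous (survival μ) := by
  rw [survival_eq_one_sub_cdf]
  exact continuous_const.sub continuous_cdf

variable [NullSingletonClass μ]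

lemma exists_setOf_survival_le_eq_Ici {t : ℝ} (ht0 : 0 < t) (ht1 : t < 1) :
    ∃ s, survival μ s = t ∧ {y | survival μ y ≤ t} = Ici s := by
  set S := {y | survival μ y ≤ t}
  obtain ⟨a, ha⟩ := ((tendsto_survival_atTop (μ := μ)).eventually (gt_mem_nhds ht0)).exists
  obtain ⟨b, hb⟩ := ((tendsto_survival_atBot (μ := μ)).eventually (lt_mem_nhds ht1)).exists
  have hbdd : BddBelow S := ⟨b, fun y hy => (antitone_survival.reflect_lt (hy.trans_lt hb)).le⟩
  have hmem : sInf S ∈ S :=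
    (isClosed_le continuous_survival continuous_const).csInf_mem ⟨a, ha.le⟩ hbdd
  refine ⟨sInf S, le_antisymm hmem ?_, Subset.antisymm (fun y hy => csInf_le hbdd hy)
    fun y hy => (antitone_survival hy).trans hmem⟩
  have hlt : Iio (sInf S) ⊆ {y | t ≤ survival μ y} := fun y (hy : y < sInf S) =>
    show t ≤ survival μ y from not_lt.1 fun h => hy.not_ge (csInf_le hbdd h.le)
  exact (isClosed_le continuous_const continuous_survival).closure_subset_iff.2 hlt
    (by rw [closure_Iio]; exact mem_Iic.2 le_rfl)

lemma measure_survival_le {t : ℝ} (ht0 : 0 < t) (ht1 : t < 1) :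
    μ {y | survival μ y ≤ t} = ENNReal.ofReal t := by
  obtain ⟨s, hs, hS⟩ := exists_setOf_survival_le_eq_Ici (μ := μ) ht0 ht1
  rw [hS, measure_congr Ioi_ae_eq_Ici.symm, ← ofReal_survival, hs]

lemma measure_survival_le_of_nonpos {t : ℝ} (ht : t ≤ 0) : μ {y | survival μ y ≤ t} = 0 := by
  have hbound : ∀ δ ∈ Ioo (0 : ℝ) 1, μ {y | survival μ y ≤ t} ≤ ENNReal.ofReal δ :=
    fun δ hδ => (measure_mono fun y hy => le_trans hy (ht.trans hδ.1.le)).trans_eq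
      (measure_survival_le hδ.1 hδ.2)
  have hlim : Tendsto ENNReal.ofReal (𝓝[>] 0) (𝓝 0) := by
    simpa using (ENNReal.continuous_ofReal.tendsto 0).mono_left nhdsWithin_le_nhds
  exact le_antisymm (ge_of_tendsto hlim (eventually_of_mem (Ioo_mem_nhdsGT one_pos) hbound))
    bot_le

lemma map_survival : μ.map (survival μ) = volume.restrict (Ioc 0 1) := by
  have : IsProbabilityMeasure (μ.map (survival μ)) :=
    Measure.isProbabilityMeasure_map measurable_survival.aemeasurable
  refine Measure.ext_of_Iic _ _ fun t => ?_
  rw [Measure.map_apply measurable_survival measurableSet_Iic,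
    Measure.restrict_apply measurableSet_Iic]
  rcases le_or_gt t 0 with ht0 | ht0
  · rw [Iic_inter_Ioc_of_le (ht0.trans zero_le_one), Ioc_eq_empty ht0.not_gt]
    exact (measure_survival_le_of_nonpos ht0).trans measure_empty.symm
  rcases lt_or_ge t 1 with ht1 | ht1
  · rw [Iic_inter_Ioc_of_le ht1.le, Real.volume_Ioc, sub_zero]
    exact measure_survival_le ht0 ht1
  · rw [inter_eq_right.2 (Ioc_subset_Iic_self.trans (Iic_subset_Iic.2 ht1)), Real.volume_Ioc,
      sub_zero, ENNReal.ofReal_one, ← measure_univ (μ := μ)]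
    exact congrArg μ (eq_univ_of_forall fun y => (survival_le_one y).trans ht1)

lemma survival_preimage_Iio_ae_eq_Ioi (x : ℝ) :
    survival μ ⁻¹' Iio (survival μ x) =ᵐ[μ] Ioi x := by
  refine ae_eq_of_subset_of_measure_ge (fun y hy => antitone_survival.reflect_lt hy) ?_
    (measurable_survival measurableSet_Iio).nullMeasurableSet (measure_ne_top _ _)
  rw [← Measure.map_apply measurable_survival measurableSet_Iio, map_survival,
    Measure.restrict_apply measurableSet_Iio, Iio_inter_Ioc_of_le (survival_le_one x),
    Real.volume_Ioo, sub_zero, ofReal_survival]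

lemma map_restrict_Ioi_survival (x : ℝ) :
    (μ.restrict (Ioi x)).map (survival μ) = volume.restrict (Ioo 0 (survival μ x)) := by
  rw [← Measure.restrict_congr_set (survival_preimage_Iio_ae_eq_Ioi x),
    ← Measure.restrict_map measurable_survival measurableSet_Iio, map_survival,
    Measure.restrict_restrict measurableSet_Iio, Iio_inter_Ioc_of_le (survival_le_one x)]

lemma integrableOn_Ioi_mul_survival_rpow {α : ℝ} (hα : 0 < α) (x : ℝ) :
    IntegrableOn (fun y => α * survival μ y ^ (α - 1)) (Ioi x) μ := by
  have hf : Measurable fun t : ℝ => α * t ^ (α - 1) := by fun_prop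
  refine (integrable_map_measure hf.aestronglyMeasurable measurable_survival.aemeasurable).1 ?_
  rw [map_restrict_Ioi_survival]
  exact ((intervalIntegral.intervalIntegrable_rpow' (by linarith)).1.mono_set
    Ioo_subset_Ioc_self).const_mul α

lemma setIntegral_Ioi_mul_survival_rpow {α : ℝ} (hα : 0 < α) (x : ℝ) :
    ∫ y in Ioi x, α * survival μ y ^ (α - 1) ∂μ = survival μ x ^ α := by
  have hf : Measurable fun t : ℝ => α * t ^ (α - 1) := by fun_prop
  rw [← setIntegral_Ioo_mul_rpow_sub_one hα (survival_nonneg x), ← map_restrict_Ioi_survival,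
    integral_map measurable_survival.aemeasurable hf.aestronglyMeasurable]

lemma setIntegral_Ioi_one_sub_mul_survival_rpow {α : ℝ} (hα : 0 < α) (x : ℝ) :
    ∫ y in Ioi x, (1 - α * survival μ y ^ (α - 1)) ∂μ = survival μ x - survival μ x ^ α := by
  rw [integral_sub (integrable_const 1) (integrableOn_Ioi_mul_survival_rpow hα x),
    setIntegral_const, setIntegral_Ioi_mul_survival_rpow hα x, smul_eq_mul, mul_one]
  rfl

end ProbabilityTheory

open ProbabilityTheory

theorem wcrte_alt_expression_general (μ : Measure ℝ) [IsProbabilityMeasure μ]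
    (hsupp : μ (Set.Iio 0) = 0) (hcont : ∀ x : ℝ, μ {x} = 0)
    (α : ℝ) (hα : 0 < α)
    (hfin2 : Integrable
      (fun x : ℝ => x ^ 2 * (1 - α * (μ (Set.Ioi x)).toReal ^ (α - 1))) μ) :
    (1/(α-1)) * ∫ x in Set.Ioi (0:ℝ),
        x * ((μ (Set.Ioi x)).toReal - (μ (Set.Ioi x)).toReal ^ α)
      = (1/(2*(α-1))) * ∫ x, x ^ 2 * (1 - α * (μ (Set.Ioi x)).toReal ^ (α - 1)) ∂μ := by
  have : NullSingletonClass μ := ⟨hcont⟩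
  have hg : AEStronglyMeasurable (fun y => 1 - α * survival μ y ^ (α - 1)) μ :=
    (measurable_const.sub ((measurable_survival.pow_const _).const_mul α)).aestronglyMeasurable
  have key := setIntegral_Ioi_mul_setIntegral_Ioi hsupp hg hfin2
  simp only [setIntegral_Ioi_one_sub_mul_survival_rpow hα] at key
  change 1 / (α - 1) * ∫ x in Ioi 0, x * (survival μ x - survival μ x ^ α)
    = 1 / (2 * (α - 1)) * ∫ x, x ^ 2 * (1 - α * survival μ x ^ (α - 1)) ∂μ
  rw [key, ← one_div_mul_one_div_rev]
  ring

theorem wcrte_alt_expression (μ : Measure ℝ) [IsProbabilityMeasure μ]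
    (hsupp : μ (Set.Iio 0) = 0) (hcont : ∀ x : ℝ, μ {x} = 0)
    (α : ℝ) (hα : 0 < α) (hα1 : α ≠ 1)
    (hfin : IntegrableOn
      (fun x : ℝ => x * ((μ (Set.Ioi x)).toReal - (μ (Set.Ioi x)).toReal ^ α))
      (Set.Ioi 0))
    (hfin2 : Integrable
      (fun x : ℝ => x ^ 2 * (1 - α * (μ (Set.Ioi x)).toReal ^ (α - 1))) μ) :
    (1/(α-1)) * ∫ x in Set.Ioi (0:ℝ),
        x * ((μ (Set.Ioi x)).toReal - (μ (Set.Ioi x)).toReal ^ α)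
      = (1/(2*(α-1))) * ∫ x, x ^ 2 * (1 - α * (μ (Set.Ioi x)).toReal ^ (α - 1)) ∂μ :=
  wcrte_alt_expression_general μ hsupp hcont α hα hfin2
end

section
/- If X is uniformly distributed on (0, θ) with θ > 0 and 0 < α ≠ 1, then ξ_α^w(X) = θ²(α+4)/(6(α+1)(α+2)). -/
/-!
The substitution `u = 1 - x/θ` turns the integral into `θ² ∫₀¹ (1 - u)(u - u^α) du`, and
`∫₀¹ (1 - u) u^α du = 1/((α+1)(α+2))` (a Beta integral), so the integral equals
`θ² (1/6 - 1/((α+1)(α+2))) = θ² (α-1)(α+4) / (6(α+1)(α+2))`; the factor `α - 1` cancels.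
-/

open MeasureTheory Set

theorem integral_mul_comp_one_sub_div (g : ℝ → ℝ) {θ : ℝ} (hθ : θ ≠ 0) :
    ∫ x in (0:ℝ)..θ, x * g (1 - x / θ) = θ ^ 2 * ∫ u in (0:ℝ)..1, (1 - u) * g u := by
  have hreflect : ∫ t in (0:ℝ)..1, t * g (1 - t) = ∫ u in (0:ℝ)..1, (1 - u) * g u := by
    simpa using intervalIntegral.integral_comp_sub_left (a := 0) (b := 1)
      (fun u => (1 - u) * g u) 1
  calc ∫ x in (0:ℝ)..θ, x * g (1 - x / θ)
      = ∫ x in (0:ℝ)..θ, θ * ((x / θ) * g (1 - x / θ)) := by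
        congr 1; ext x; field_simp
    _ = θ * (θ * ∫ t in (0:ℝ)..1, t * g (1 - t)) := by
        rw [intervalIntegral.integral_const_mul,
          intervalIntegral.integral_comp_div (fun t => t * g (1 - t)) hθ, zero_div, div_self hθ,
          smul_eq_mul]
    _ = θ ^ 2 * ∫ u in (0:ℝ)..1, (1 - u) * g u := by rw [hreflect]; ring

theorem intervalIntegrable_one_sub_mul_rpow {α : ℝ} (hα : -1 < α) :
    IntervalIntegrable (fun u : ℝ => (1 - u) * u ^ α) volume 0 1 :=
  (intervalIntegral.intervalIntegrable_rpow' hα).continuousOn_mul (by fun_prop)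

theorem integral_one_sub_mul_rpow {α : ℝ} (hα : -1 < α) :
    ∫ u in (0:ℝ)..1, (1 - u) * u ^ α = 1 / ((α + 1) * (α + 2)) := by
  have hα1 : α + 1 ≠ 0 := by linarith
  have hα2 : α + 2 ≠ 0 := by linarith
  have hexpand :
      EqOn (fun u : ℝ => (1 - u) * u ^ α) (fun u => u ^ α - u ^ (α + 1)) (uIcc 0 1) := by
    intro u hu
    rw [uIcc_of_le zero_le_one] at hu
    simp only [Real.rpow_add_one' hu.1 hα1]
    ring
  rw [intervalIntegral.integral_congr hexpand, intervalIntegral.integral_sub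
    (intervalIntegral.intervalIntegrable_rpow' hα)
    (intervalIntegral.intervalIntegrable_rpow' (by linarith)),
    integral_rpow (Or.inl hα), integral_rpow (Or.inl (by linarith)),
    show α + 1 + 1 = α + 2 by ring]
  simp only [Real.one_rpow, Real.zero_rpow hα1, Real.zero_rpow hα2]
  field_simp
  ring

theorem integral_one_sub_mul_sub_rpow {α : ℝ} (hα : -1 < α) :
    ∫ u in (0:ℝ)..1, (1 - u) * (u - u ^ α) = (α - 1) * (α + 4) / (6 * (α + 1) * (α + 2)) := by
  have hα1 : α + 1 ≠ 0 := by linarith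
  have hα2 : α + 2 ≠ 0 := by linarith
  have hlinear := integral_one_sub_mul_rpow (α := 1) (by norm_num)
  simp only [Real.rpow_one] at hlinear
  simp only [mul_sub]
  rw [intervalIntegral.integral_sub (Continuous.intervalIntegrable (by fun_prop) 0 1)
    (intervalIntegrable_one_sub_mul_rpow hα), hlinear,
    integral_one_sub_mul_rpow hα]
  field_simp
  ring

theorem wcrte_uniform (θ α : ℝ) (hθ : 0 < θ) (hα : 0 < α) (hα1 : α ≠ 1) :
    (1/(α-1)) * ∫ x in Set.Ioo 0 θ, x * ((1 - x/θ) - (1 - x/θ) ^ α)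
      = θ ^ 2 * (α + 4) / (6 * (α + 1) * (α + 2)) := by
  rw [← integral_Ioc_eq_integral_Ioo, ← intervalIntegral.integral_of_le hθ.le,
    integral_mul_comp_one_sub_div (fun u => u - u ^ α) hθ.ne',
    integral_one_sub_mul_sub_rpow (by linarith)]
  have hαm1 : α - 1 ≠ 0 := sub_ne_zero.mpr hα1
  have hαp1 : α + 1 ≠ 0 := by linarith
  have hαp2 : α + 2 ≠ 0 := by linarith
  field_simp
end

section
/- Let X_1, …, X_n be a random sample from a continuous distribution concentrated on [0,1], with order statistics X_{(1)} ≤ … ≤ X_{(n)}. For α > 1, the estimator ξ̂_α^w(X) = (1/(2(α−1))) Σ_{i=1}^{n−1} (X²_{(i+1)} − X²_{(i)}) [(1 − i/n) − (1 − i/n)^α] satisfies 0 ≤ ξ̂_α^w(X) ≤ 1/(2 α^{α/(α−1)}). -/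
/-!
Write `g t = t - t ^ α`. Every weight `X(i+1)^2 - X(i)^2` is nonnegative and the weights telescope
to `X(n)^2 - X(1)^2 ≤ 1`, while `0 ≤ g ≤ (α - 1) / α ^ (α / (α - 1))` on `[0, 1]`; the upper bound
on `g` is Young's inequality for the conjugate exponents `α` and `α / (α - 1)`, applied to
`t = (t α^(1/α)) · α^(-1/α)`.
-/

open Finset

lemma sub_rpow_nonneg {α t : ℝ} (hα : 1 ≤ α) (ht : t ∈ Set.Icc 0 1) : 0 ≤ t - t ^ α :=
  sub_nonneg.2 (Real.rpow_le_self_of_le_one ht.1 ht.2 hα)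

lemma sub_rpow_le {α t : ℝ} (hα : 1 < α) (ht : 0 ≤ t) :
    t - t ^ α ≤ (α - 1) / α ^ (α / (α - 1)) := by
  have hα0 : 0 < α := by linarith
  set β := α / (α - 1) with hβ_def
  have hβ : α.HolderConjugate β := (Real.holderConjugate_iff_eq_conjExponent hα).2 rfl
  have hyoung := Real.young_inequality_of_nonneg (a := t * α ^ (1 / α)) (b := α ^ (-(1 / α)))
    (by positivity) (by positivity) hβ
  have hprod : t * α ^ (1 / α) * α ^ (-(1 / α)) = t := by
    rw [mul_assoc, ← Real.rpow_add hα0, add_neg_cancel, Real.rpow_zero, mul_one]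
  have hfirst : (t * α ^ (1 / α)) ^ α / α = t ^ α := by
    rw [Real.mul_rpow ht (by positivity), ← Real.rpow_mul hα0.le, one_div_mul_cancel hα0.ne',
      Real.rpow_one, mul_div_cancel_right₀ _ hα0.ne']
  have hsecond : (α ^ (-(1 / α))) ^ β / β = (α - 1) / α ^ β := by
    have hexp : -(1 / α) * β = 1 - β := by
      rw [hβ_def]
      field_simp [(by linarith : α - 1 ≠ 0)]
      ring
    rw [← Real.rpow_mul hα0.le, hexp, Real.rpow_sub hα0, Real.rpow_one, hβ_def]
    field_simp
  rw [hprod, hfirst, hsecond] at hyoung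
  linarith

lemma one_sub_div_mem_Icc {i n : ℕ} (h : i ≤ n) : 1 - (i : ℝ) / n ∈ Set.Icc 0 1 := by
  have hdiv : (i : ℝ) / n ≤ 1 := div_le_one_of_le₀ (by exact_mod_cast h) n.cast_nonneg
  have hdiv_nonneg : 0 ≤ (i : ℝ) / n := by positivity
  constructor <;> linarith

lemma sum_Icc_sq_sub_sq_le_one {n : ℕ} {X : ℕ → ℝ} (hX : ∀ i ∈ Icc 1 n, X i ∈ Set.Icc (0 : ℝ) 1) :
    ∑ i ∈ Icc 1 (n - 1), (X (i + 1) ^ 2 - X i ^ 2) ≤ 1 := by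
  rcases Nat.eq_zero_or_pos n with rfl | hn
  · simp
  have hIcc : Icc 1 (n - 1) = Ico 1 n := by ext; simp; omega
  have hXn := hX n (mem_Icc.2 ⟨hn, le_rfl⟩)
  have hX1 := hX 1 (mem_Icc.2 ⟨le_rfl, hn⟩)
  rw [hIcc, sum_Ico_sub (fun i ↦ X i ^ 2) hn]
  nlinarith [hXn.1, hXn.2, hX1.1]

theorem wcrte_estimator_bounds (n : ℕ) (α : ℝ) (hα : 1 < α) (X : ℕ → ℝ)
    (hX : ∀ i ∈ Finset.Icc 1 n, X i ∈ Set.Icc (0:ℝ) 1)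
    (hmono : ∀ i j, 1 ≤ i → i ≤ j → j ≤ n → X i ≤ X j) :
    0 ≤ (1/(2*(α-1))) * ∑ i ∈ Finset.Icc 1 (n-1),
          (((X (i+1)) ^ 2 - (X i) ^ 2)
            * ((1 - (i:ℝ)/n) - (1 - (i:ℝ)/n) ^ α))
      ∧ (1/(2*(α-1))) * ∑ i ∈ Finset.Icc 1 (n-1),
          (((X (i+1)) ^ 2 - (X i) ^ 2)
            * ((1 - (i:ℝ)/n) - (1 - (i:ℝ)/n) ^ α))
        ≤ 1 / (2 * α ^ (α / (α - 1))) := by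
  have hweight : ∀ i ∈ Icc 1 (n - 1), 0 ≤ X (i + 1) ^ 2 - X i ^ 2 := fun i hi ↦ by
    obtain ⟨hi1, hin⟩ := mem_Icc.1 hi
    have hXi := hX i (mem_Icc.2 ⟨hi1, by omega⟩)
    exact sub_nonneg.2 (pow_le_pow_left₀ hXi.1 (hmono i (i + 1) hi1 (by omega) (by omega)) 2)
  have hpoint : ∀ i ∈ Icc 1 (n - 1), 1 - (i : ℝ) / n ∈ Set.Icc 0 1 :=
    fun i hi ↦ one_sub_div_mem_Icc ((mem_Icc.1 hi).2.trans (Nat.sub_le n 1))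
  have hα1 : 0 < α - 1 := by linarith
  have hscale : 0 < 1 / (2 * (α - 1)) := by positivity
  refine ⟨mul_nonneg hscale.le (sum_nonneg fun i hi ↦
    mul_nonneg (hweight i hi) (sub_rpow_nonneg hα.le (hpoint i hi))), ?_⟩
  calc _ ≤ 1 / (2 * (α - 1)) * ((∑ i ∈ Icc 1 (n - 1), (X (i + 1) ^ 2 - X i ^ 2))
            * ((α - 1) / α ^ (α / (α - 1)))) := by
        rw [sum_mul]
        gcongr with i hi
        · exact hweight i hi
        · exact sub_rpow_le hα (hpoint i hi).1
    _ ≤ 1 / (2 * (α - 1)) * (1 * ((α - 1) / α ^ (α / (α - 1)))) := by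
        gcongr
        exact sum_Icc_sq_sub_sq_le_one hX
    _ = 1 / (2 * α ^ (α / (α - 1))) := by field_simp
end

section
/- Let 0 ≤ X_{(1)} ≤ … ≤ X_{(n)} ≤ 1. Then the estimator ξ̂^w(X) = −(1/2) Σ_{i=1}^{n−1} (X²_{(i+1)} − X²_{(i)}) (1 − i/n) log(1 − i/n) satisfies 0 ≤ ξ̂^w(X) ≤ 1/(2e). -/
open Finset Real

lemma xlogx_bound {x : ℝ} (hx0 : 0 ≤ x) (hx1 : x ≤ 1) :
    -(x * Real.log x) ≤ Real.exp (-1) := by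
  rcases eq_or_lt_of_le hx0 with h | h
  · simp [← h]
    positivity
  · have h1 : -Real.log x ≤ Real.exp (-Real.log x - 1) := by
      have := Real.add_one_le_exp (-Real.log x - 1)
      linarith
    have h2 : Real.exp (-Real.log x - 1) = x⁻¹ * Real.exp (-1) := by
      rw [show -Real.log x - 1 = -Real.log x + (-1) by ring, Real.exp_add,
        Real.exp_neg, Real.exp_log h]
    have h3 : -Real.log x ≤ x⁻¹ * Real.exp (-1) := h2 ▸ h1
    have := mul_le_mul_of_nonneg_left h3 hx0
    calc -(x * Real.log x) = x * (-Real.log x) := by ring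
      _ ≤ x * (x⁻¹ * Real.exp (-1)) := this
      _ = Real.exp (-1) := by field_simp

theorem wcre_estimator_bounds (n : ℕ) (X : ℕ → ℝ)
    (hX : ∀ i ∈ Finset.Icc 1 n, X i ∈ Set.Icc (0:ℝ) 1)
    (hmono : ∀ i j, 1 ≤ i → i ≤ j → j ≤ n → X i ≤ X j) :
    0 ≤ -(1/2) * ∑ i ∈ Finset.Icc 1 (n-1),
          (((X (i+1)) ^ 2 - (X i) ^ 2)
            * ((1 - (i:ℝ)/n) * Real.log (1 - (i:ℝ)/n)))
      ∧ -(1/2) * ∑ i ∈ Finset.Icc 1 (n-1),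
          (((X (i+1)) ^ 2 - (X i) ^ 2)
            * ((1 - (i:ℝ)/n) * Real.log (1 - (i:ℝ)/n)))
        ≤ 1 / (2 * Real.exp 1) := by
  rcases Nat.lt_or_ge n 2 with hn | hn
  · have he : Finset.Icc 1 (n-1) = ∅ := by
      interval_cases n <;> decide
    rw [he]
    simp
    positivity
  -- n ≥ 2
  have hn1 : (1:ℝ) ≤ n := by exact_mod_cast le_trans (by norm_num) hn
  have hnpos : (0:ℝ) < n := by linarith
  -- facts about each i in Icc 1 (n-1)
  have hfacts : ∀ i ∈ Finset.Icc 1 (n-1),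
      0 ≤ (X (i+1))^2 - (X i)^2 ∧ 0 ≤ 1 - (i:ℝ)/n ∧ (1:ℝ) - (i:ℝ)/n ≤ 1 := by
    intro i hi
    simp only [Finset.mem_Icc] at hi
    obtain ⟨hi1, hi2⟩ := hi
    have hin : i + 1 ≤ n := by omega
    have hXi := hX i (Finset.mem_Icc.mpr ⟨hi1, by omega⟩)
    have hXi1 := hX (i+1) (Finset.mem_Icc.mpr ⟨by omega, hin⟩)
    have hm : X i ≤ X (i+1) := hmono i (i+1) hi1 (by omega) hin
    refine ⟨?_, ?_, ?_⟩
    · have : (X i)^2 ≤ (X (i+1))^2 := by nlinarith [hXi.1, hXi1.1]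
      linarith
    · have : (i:ℝ) ≤ n := by exact_mod_cast le_trans hi2 (Nat.sub_le n 1)
      have := div_le_one_of_le₀ this hnpos.le
      linarith
    · have : (0:ℝ) ≤ (i:ℝ)/n := by positivity
      linarith
  constructor
  · -- lower bound: sum ≤ 0
    have hsum : ∑ i ∈ Finset.Icc 1 (n-1),
        (((X (i+1)) ^ 2 - (X i) ^ 2)
          * ((1 - (i:ℝ)/n) * Real.log (1 - (i:ℝ)/n))) ≤ 0 := by
      apply Finset.sum_nonpos
      intro i hi
      obtain ⟨h1, h2, h3⟩ := hfacts i hi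
      have hlog : Real.log (1 - (i:ℝ)/n) ≤ 0 := Real.log_nonpos h2 h3
      have : (1 - (i:ℝ)/n) * Real.log (1 - (i:ℝ)/n) ≤ 0 :=
        mul_nonpos_of_nonneg_of_nonpos h2 hlog
      exact mul_nonpos_of_nonneg_of_nonpos h1 this
    linarith
  · -- upper bound
    have hstep : ∀ i ∈ Finset.Icc 1 (n-1),
        -(((X (i+1)) ^ 2 - (X i) ^ 2)
            * ((1 - (i:ℝ)/n) * Real.log (1 - (i:ℝ)/n)))
          ≤ ((X (i+1)) ^ 2 - (X i) ^ 2) * Real.exp (-1) := by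
      intro i hi
      obtain ⟨h1, h2, h3⟩ := hfacts i hi
      have hb := xlogx_bound h2 h3
      calc -(((X (i+1)) ^ 2 - (X i) ^ 2)
            * ((1 - (i:ℝ)/n) * Real.log (1 - (i:ℝ)/n)))
          = ((X (i+1)) ^ 2 - (X i) ^ 2)
              * (-((1 - (i:ℝ)/n) * Real.log (1 - (i:ℝ)/n))) := by ring
        _ ≤ ((X (i+1)) ^ 2 - (X i) ^ 2) * Real.exp (-1) :=
            mul_le_mul_of_nonneg_left hb h1
    have htel : ∑ i ∈ Finset.Icc 1 (n-1), ((X (i+1)) ^ 2 - (X i) ^ 2)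
        = (X n)^2 - (X 1)^2 := by
      have h' : Finset.Icc 1 (n-1) = Finset.Ico 1 n := by
        ext x; simp only [Finset.mem_Icc, Finset.mem_Ico]; omega
      rw [h', Finset.sum_Ico_eq_sum_range]
      have h1n : 1 + (n-1) = n := by omega
      calc ∑ k ∈ Finset.range (n-1), ((X (1+k+1))^2 - (X (1+k))^2)
          = ∑ k ∈ Finset.range (n-1),
              ((fun i => (X (1+i))^2) (k+1) - (fun i => (X (1+i))^2) k) := rfl
        _ = (X (1+(n-1)))^2 - (X (1+0))^2 := by
            simpa using Finset.sum_range_sub (fun i => (X (1+i))^2) (n-1)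
        _ = (X n)^2 - (X 1)^2 := by rw [h1n]
    have hsumle : ∑ i ∈ Finset.Icc 1 (n-1),
        -(((X (i+1)) ^ 2 - (X i) ^ 2)
          * ((1 - (i:ℝ)/n) * Real.log (1 - (i:ℝ)/n)))
        ≤ ((X n)^2 - (X 1)^2) * Real.exp (-1) := by
      calc _ ≤ ∑ i ∈ Finset.Icc 1 (n-1), ((X (i+1)) ^ 2 - (X i) ^ 2) * Real.exp (-1) :=
            Finset.sum_le_sum hstep
        _ = ((X n)^2 - (X 1)^2) * Real.exp (-1) := by
            rw [← Finset.sum_mul, htel]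
    have hXn := hX n (Finset.mem_Icc.mpr ⟨by omega, le_refl n⟩)
    have hX1 := hX 1 (Finset.mem_Icc.mpr ⟨le_refl 1, by omega⟩)
    have hle1 : (X n)^2 - (X 1)^2 ≤ 1 := by nlinarith [hXn.1, hXn.2, hX1.1]
    have hexppos : (0:ℝ) < Real.exp (-1) := Real.exp_pos _
    have : ((X n)^2 - (X 1)^2) * Real.exp (-1) ≤ Real.exp (-1) := by nlinarith
    have hfin : ∑ i ∈ Finset.Icc 1 (n-1),
        -(((X (i+1)) ^ 2 - (X i) ^ 2)
          * ((1 - (i:ℝ)/n) * Real.log (1 - (i:ℝ)/n))) ≤ Real.exp (-1) := by linarith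
    rw [Finset.sum_neg_distrib] at hfin
    have hinv : Real.exp (-1) = 1 / Real.exp 1 := by
      rw [Real.exp_neg]; exact inv_eq_one_div _
    rw [hinv] at hfin
    have hepos : (0:ℝ) < Real.exp 1 := Real.exp_pos 1
    rw [div_mul_eq_div_div_swap]
    linarith [hfin]
end
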